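/- Let T be a triangle and let u ∈ H¹(T). Let Π^(α)u be the unique function of the form a₁(x²+y²)+a₂x+a₃y+a₄ whose mean over T and whose mean over each edge of T agree with those of u. Then ‖∇Π^(α)u‖²_{L²(T)} + ‖∇(u - Π^(α)u)‖²_{L²(T)} = ‖∇u‖²_{L²(T)}, i.e., the interpolation is an orthogonal projection in the H¹ seminorm. -/

import Mathlib

open MeasureTheory intervalIntegral

noncomputable def pd1 (u : ℝ × ℝ → ℝ) (p : ℝ × ℝ) : ℝ := fderiv ℝ u p (1, 0)
noncomputable def pd2 (u : ℝ × ℝ → ℝ) (p : ℝ × ℝ) : ℝ := fderiv ℝ u p (0, 1)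

/-! ### Auxiliary: the reference triangle -/

def refTri : Set (ℝ × ℝ) := {q | 0 ≤ q.1 ∧ 0 ≤ q.2 ∧ q.1 + q.2 ≤ 1}

lemma convex_refTri : Convex ℝ refTri := by
  intro x hx y hy a b ha hb hab
  obtain ⟨hx1, hx2, hx3⟩ := hx; obtain ⟨hy1, hy2, hy3⟩ := hy
  refine ⟨?_, ?_, ?_⟩ <;>
    simp only [Prod.fst_add, Prod.snd_add, Prod.smul_fst, Prod.smul_snd, smul_eq_mul] <;>
    nlinarith

lemma refTri_eq : refTri = convexHull ℝ {((0:ℝ),(0:ℝ)), (1,0), (0,1)} := by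
  apply le_antisymm
  · intro z hz
    obtain ⟨h1, h2, h3⟩ := hz
    have hmem : ∀ i : Fin 3, (![(0,0), (1,0), (0,1)] : Fin 3 → ℝ × ℝ) i ∈
        convexHull ℝ ({((0:ℝ),(0:ℝ)), (1,0), (0,1)} : Set (ℝ×ℝ)) := by
      intro i; fin_cases i <;> apply subset_convexHull <;> simp
    have := (convex_convexHull ℝ ({((0:ℝ),(0:ℝ)), (1,0), (0,1)} : Set (ℝ×ℝ))).sum_mem
      (t := (Finset.univ : Finset (Fin 3)))
      (w := ![1 - z.1 - z.2, z.1, z.2]) (z := ![(0,0), (1,0), (0,1)])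
      (fun i _ => by fin_cases i <;> simp <;> linarith)
      (by simp [Fin.sum_univ_three]; ring)
      (fun i _ => hmem i)
    convert this using 1
    simp [Fin.sum_univ_three, Prod.ext_iff]
  · apply convexHull_min _ convex_refTri
    intro z hz
    simp only [Set.mem_insert_iff, Set.mem_singleton_iff] at hz
    rcases hz with h|h|h <;> subst h <;> exact ⟨by norm_num, by norm_num, by norm_num⟩

lemma isCompact_refTri : IsCompact refTri := by
  rw [refTri_eq]
  exact (Set.toFinite _).isCompact_convexHull ℝ

lemma measurableSet_refTri : MeasurableSet refTri :=
  isCompact_refTri.isClosed.measurableSet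

/-! ### Green-type lemmas on the reference triangle -/

lemma green1 (f : ℝ×ℝ→ℝ) (hf : ContDiff ℝ 1 f) :
    ∫ q in refTri, pd1 f q = ∫ t in (0:ℝ)..1, (f (1-t, t) - f (0, t)) := by
  have hc : Continuous (pd1 f) := (hf.continuous_fderiv one_ne_zero).clm_apply continuous_const
  have hInd : Integrable (Set.indicator refTri (pd1 f)) volume := by
    rw [integrable_indicator_iff measurableSet_refTri]
    exact hc.continuousOn.integrableOn_compact isCompact_refTri
  have key : ∀ y : ℝ, (∫ x : ℝ, Set.indicator refTri (pd1 f) (x, y))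
      = Set.indicator (Set.Icc (0:ℝ) 1) (fun y => f (1-y, y) - f (0, y)) y := by
    intro y
    by_cases hy : y ∈ Set.Icc (0:ℝ) 1
    · obtain ⟨hy0, hy1⟩ := hy
      have hrw : ∀ x : ℝ, Set.indicator refTri (pd1 f) (x, y)
          = Set.indicator (Set.Icc 0 (1-y)) (fun x => pd1 f (x, y)) x := by
        intro x
        have hiff : ((x, y) ∈ refTri) ↔ x ∈ Set.Icc (0:ℝ) (1-y) := by
          simp only [refTri, Set.mem_setOf_eq, Set.mem_Icc]
          constructor
          · rintro ⟨h1, _, h3⟩; exact ⟨h1, by linarith⟩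
          · rintro ⟨h1, h2⟩; exact ⟨h1, hy0, by linarith⟩
        classical
        rw [Set.indicator_apply, Set.indicator_apply]
        exact if_congr hiff rfl rfl
      have hle : (0:ℝ) ≤ 1 - y := by linarith
      have hder : ∀ x ∈ Set.uIcc (0:ℝ) (1-y),
          HasDerivAt (fun x => f (x, y)) (pd1 f (x, y)) x := by
        intro x _
        have h1 : HasDerivAt (fun x : ℝ => (x, y)) ((1:ℝ), (0:ℝ)) x :=
          (hasDerivAt_id x).prodMk (hasDerivAt_const x y)
        exact (hf.differentiable one_ne_zero (x, y)).hasFDerivAt.comp_hasDerivAt x h1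
      calc (∫ x : ℝ, Set.indicator refTri (pd1 f) (x, y))
          = ∫ x : ℝ, Set.indicator (Set.Icc 0 (1-y)) (fun x => pd1 f (x, y)) x := by
            simp_rw [hrw]
        _ = ∫ x in Set.Icc (0:ℝ) (1-y), pd1 f (x, y) :=
            MeasureTheory.integral_indicator measurableSet_Icc
        _ = ∫ x in (0:ℝ)..(1-y), pd1 f (x, y) := by
            rw [intervalIntegral.integral_of_le hle, integral_Icc_eq_integral_Ioc]
        _ = f (1-y, y) - f (0, y) := by
            apply intervalIntegral.integral_eq_sub_of_hasDerivAt hder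
            exact (hc.comp (continuous_id.prodMk continuous_const)).intervalIntegrable 0 (1-y)
        _ = Set.indicator (Set.Icc (0:ℝ) 1) (fun y => f (1-y, y) - f (0, y)) y := by
            rw [Set.indicator_of_mem (Set.mem_Icc.mpr ⟨hy0, hy1⟩)]
    · have hrw : ∀ x : ℝ, Set.indicator refTri (pd1 f) (x, y) = 0 := by
        intro x
        apply Set.indicator_of_notMem
        simp only [Set.mem_Icc, not_and_or, not_le] at hy
        rintro ⟨h1, h2, h3⟩
        rcases hy with h | h
        · linarith
        · linarith
      simp_rw [hrw]
      rw [Set.indicator_of_notMem hy]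
      simp
  calc ∫ q in refTri, pd1 f q
      = ∫ q : ℝ×ℝ, Set.indicator refTri (pd1 f) q :=
        (MeasureTheory.integral_indicator measurableSet_refTri).symm
    _ = ∫ y : ℝ, ∫ x : ℝ, Set.indicator refTri (pd1 f) (x, y) := by
        rw [Measure.volume_eq_prod] at hInd ⊢
        exact integral_prod_symm _ hInd
    _ = ∫ y : ℝ, Set.indicator (Set.Icc (0:ℝ) 1) (fun y => f (1-y, y) - f (0, y)) y := by
        simp_rw [key]
    _ = ∫ t in (0:ℝ)..1, (f (1-t, t) - f (0, t)) := by
        rw [MeasureTheory.integral_indicator measurableSet_Icc,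
          intervalIntegral.integral_of_le (by norm_num : (0:ℝ) ≤ 1),
          integral_Icc_eq_integral_Ioc]

lemma green2 (f : ℝ×ℝ→ℝ) (hf : ContDiff ℝ 1 f) :
    ∫ q in refTri, pd2 f q = ∫ t in (0:ℝ)..1, (f (t, 1-t) - f (t, 0)) := by
  have hc : Continuous (pd2 f) := (hf.continuous_fderiv one_ne_zero).clm_apply continuous_const
  have hInd : Integrable (Set.indicator refTri (pd2 f)) volume := by
    rw [integrable_indicator_iff measurableSet_refTri]
    exact hc.continuousOn.integrableOn_compact isCompact_refTri
  have key : ∀ x : ℝ, (∫ y : ℝ, Set.indicator refTri (pd2 f) (x, y))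
      = Set.indicator (Set.Icc (0:ℝ) 1) (fun x => f (x, 1-x) - f (x, 0)) x := by
    intro x
    by_cases hx : x ∈ Set.Icc (0:ℝ) 1
    · obtain ⟨hx0, hx1⟩ := hx
      have hrw : ∀ y : ℝ, Set.indicator refTri (pd2 f) (x, y)
          = Set.indicator (Set.Icc 0 (1-x)) (fun y => pd2 f (x, y)) y := by
        intro y
        have hiff : ((x, y) ∈ refTri) ↔ y ∈ Set.Icc (0:ℝ) (1-x) := by
          simp only [refTri, Set.mem_setOf_eq, Set.mem_Icc]
          constructor
          · rintro ⟨_, h2, h3⟩; exact ⟨h2, by linarith⟩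
          · rintro ⟨h1, h2⟩; exact ⟨hx0, h1, by linarith⟩
        classical
        rw [Set.indicator_apply, Set.indicator_apply]
        exact if_congr hiff rfl rfl
      have hle : (0:ℝ) ≤ 1 - x := by linarith
      have hder : ∀ y ∈ Set.uIcc (0:ℝ) (1-x),
          HasDerivAt (fun y => f (x, y)) (pd2 f (x, y)) y := by
        intro y _
        have h1 : HasDerivAt (fun y : ℝ => (x, y)) ((0:ℝ), (1:ℝ)) y :=
          (hasDerivAt_const y x).prodMk (hasDerivAt_id y)
        exact (hf.differentiable one_ne_zero (x, y)).hasFDerivAt.comp_hasDerivAt y h1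
      calc (∫ y : ℝ, Set.indicator refTri (pd2 f) (x, y))
          = ∫ y : ℝ, Set.indicator (Set.Icc 0 (1-x)) (fun y => pd2 f (x, y)) y := by
            simp_rw [hrw]
        _ = ∫ y in Set.Icc (0:ℝ) (1-x), pd2 f (x, y) :=
            MeasureTheory.integral_indicator measurableSet_Icc
        _ = ∫ y in (0:ℝ)..(1-x), pd2 f (x, y) := by
            rw [intervalIntegral.integral_of_le hle, integral_Icc_eq_integral_Ioc]
        _ = f (x, 1-x) - f (x, 0) := by
            apply intervalIntegral.integral_eq_sub_of_hasDerivAt hder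
            exact (hc.comp (continuous_const.prodMk continuous_id)).intervalIntegrable 0 (1-x)
        _ = Set.indicator (Set.Icc (0:ℝ) 1) (fun x => f (x, 1-x) - f (x, 0)) x := by
            rw [Set.indicator_of_mem (Set.mem_Icc.mpr ⟨hx0, hx1⟩)]
    · have hrw : ∀ y : ℝ, Set.indicator refTri (pd2 f) (x, y) = 0 := by
        intro y
        apply Set.indicator_of_notMem
        simp only [Set.mem_Icc, not_and_or, not_le] at hx
        rintro ⟨h1, h2, h3⟩
        rcases hx with h | h
        · linarith
        · linarith
      simp_rw [hrw]
      rw [Set.indicator_of_notMem hx]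
      simp
  calc ∫ q in refTri, pd2 f q
      = ∫ q : ℝ×ℝ, Set.indicator refTri (pd2 f) q :=
        (MeasureTheory.integral_indicator measurableSet_refTri).symm
    _ = ∫ x : ℝ, ∫ y : ℝ, Set.indicator refTri (pd2 f) (x, y) := by
        rw [Measure.volume_eq_prod] at hInd ⊢
        exact integral_prod _ hInd
    _ = ∫ x : ℝ, Set.indicator (Set.Icc (0:ℝ) 1) (fun x => f (x, 1-x) - f (x, 0)) x := by
        simp_rw [key]
    _ = ∫ t in (0:ℝ)..1, (f (t, 1-t) - f (t, 0)) := by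
        rw [MeasureTheory.integral_indicator measurableSet_Icc,
          intervalIntegral.integral_of_le (by norm_num : (0:ℝ) ≤ 1),
          integral_Icc_eq_integral_Ioc]

/-! ### Derivative computations -/

lemma clm_apply_eq (L : ℝ×ℝ →L[ℝ] ℝ) (v : ℝ×ℝ) :
    L v = v.1 * L (1, 0) + v.2 * L (0, 1) := by
  have hv : v = v.1 • ((1:ℝ), (0:ℝ)) + v.2 • ((0:ℝ), (1:ℝ)) := by
    simp [Prod.ext_iff]
  calc L v = L (v.1 • ((1:ℝ), (0:ℝ)) + v.2 • ((0:ℝ), (1:ℝ))) := by rw [← hv]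
    _ = v.1 * L (1, 0) + v.2 * L (0, 1) := by
        rw [map_add, L.map_smul, L.map_smul]; simp

lemma continuous_pd1 (f : ℝ×ℝ→ℝ) (hf : ContDiff ℝ 1 f) : Continuous (pd1 f) :=
  (hf.continuous_fderiv one_ne_zero).clm_apply continuous_const

lemma continuous_pd2 (f : ℝ×ℝ→ℝ) (hf : ContDiff ℝ 1 f) : Continuous (pd2 f) :=
  (hf.continuous_fderiv one_ne_zero).clm_apply continuous_const

lemma hasFDerivAt_P (a₁ a₂ a₃ a₄ : ℝ) (q : ℝ×ℝ) :
    HasFDerivAt (fun q : ℝ×ℝ => a₁ * (q.1^2 + q.2^2) + a₂ * q.1 + a₃ * q.2 + a₄)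
      ((2*a₁*q.1 + a₂) • ContinuousLinearMap.fst ℝ ℝ ℝ
        + (2*a₁*q.2 + a₃) • ContinuousLinearMap.snd ℝ ℝ ℝ) q := by
  have hfun : (fun q : ℝ×ℝ => a₁ * (q.1^2 + q.2^2) + a₂ * q.1 + a₃ * q.2 + a₄)
      = (fun q : ℝ×ℝ => a₁ * (q.1*q.1 + q.2*q.2) + a₂ * q.1 + a₃ * q.2 + a₄) := by
    funext q; ring
  rw [hfun]
  have hf : HasFDerivAt (fun q : ℝ×ℝ => q.1) (ContinuousLinearMap.fst ℝ ℝ ℝ) q :=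
    hasFDerivAt_fst
  have hs : HasFDerivAt (fun q : ℝ×ℝ => q.2) (ContinuousLinearMap.snd ℝ ℝ ℝ) q :=
    hasFDerivAt_snd
  have h := ((((hf.mul hf).add (hs.mul hs)).const_mul a₁).add
      (hf.const_mul a₂)).add (hs.const_mul a₃) |>.add_const a₄
  refine h.congr_fderiv ?_
  ext v <;> simp <;> ring

lemma pd1_P (a₁ a₂ a₃ a₄ : ℝ) (q : ℝ×ℝ) :
    pd1 (fun q : ℝ×ℝ => a₁ * (q.1^2 + q.2^2) + a₂ * q.1 + a₃ * q.2 + a₄) q = 2*a₁*q.1 + a₂ := by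
  rw [pd1, (hasFDerivAt_P a₁ a₂ a₃ a₄ q).fderiv]
  simp

lemma pd2_P (a₁ a₂ a₃ a₄ : ℝ) (q : ℝ×ℝ) :
    pd2 (fun q : ℝ×ℝ => a₁ * (q.1^2 + q.2^2) + a₂ * q.1 + a₃ * q.2 + a₄) q = 2*a₁*q.2 + a₃ := by
  rw [pd2, (hasFDerivAt_P a₁ a₂ a₃ a₄ q).fderiv]
  simp

lemma pd1_mul (W : ℝ×ℝ→ℝ) (hW : ContDiff ℝ 1 W) (α b : ℝ) (z : ℝ×ℝ) :
    pd1 (fun z : ℝ×ℝ => (α * z.1 + b) * W z) z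
      = α * W z + (α * z.1 + b) * pd1 W z := by
  have hg : HasFDerivAt (fun z : ℝ×ℝ => α * z.1 + b)
      (α • ContinuousLinearMap.fst ℝ ℝ ℝ) z := by
    have := (hasFDerivAt_fst (𝕜 := ℝ) (p := z) (E := ℝ) (F := ℝ)).const_mul α |>.add_const b
    convert this using 1
  have h := hg.fun_mul ((hW.differentiable one_ne_zero z).hasFDerivAt)
  rw [pd1, h.fderiv]
  simp [pd1]
  ring

lemma pd2_mul (W : ℝ×ℝ→ℝ) (hW : ContDiff ℝ 1 W) (α b : ℝ) (z : ℝ×ℝ) :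
    pd2 (fun z : ℝ×ℝ => (α * z.2 + b) * W z) z
      = α * W z + (α * z.2 + b) * pd2 W z := by
  have hg : HasFDerivAt (fun z : ℝ×ℝ => α * z.2 + b)
      (α • ContinuousLinearMap.snd ℝ ℝ ℝ) z := by
    have := (hasFDerivAt_snd (𝕜 := ℝ) (p := z) (E := ℝ) (F := ℝ)).const_mul α |>.add_const b
    convert this using 1
  have h := hg.fun_mul ((hW.differentiable one_ne_zero z).hasFDerivAt)
  rw [pd2, h.fderiv]
  simp [pd2]
  ring

lemma pd1_sub (u v : ℝ×ℝ→ℝ) (hu : ContDiff ℝ 1 u) (hv : ContDiff ℝ 1 v) (z : ℝ×ℝ) :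
    pd1 (fun z => u z - v z) z = pd1 u z - pd1 v z := by
  rw [pd1, fderiv_fun_sub (hu.differentiable one_ne_zero z) (hv.differentiable one_ne_zero z)]
  simp [pd1]

lemma pd2_sub (u v : ℝ×ℝ→ℝ) (hu : ContDiff ℝ 1 u) (hv : ContDiff ℝ 1 v) (z : ℝ×ℝ) :
    pd2 (fun z => u z - v z) z = pd2 u z - pd2 v z := by
  rw [pd2, fderiv_fun_sub (hu.differentiable one_ne_zero z) (hv.differentiable one_ne_zero z)]
  simp [pd2]

/-! ### The affine parametrization of the triangle -/

noncomputable def affL (e f : ℝ×ℝ) : ℝ×ℝ →L[ℝ] ℝ×ℝ :=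
  (ContinuousLinearMap.fst ℝ ℝ ℝ).smulRight e + (ContinuousLinearMap.snd ℝ ℝ ℝ).smulRight f

noncomputable def affMap (p e f : ℝ×ℝ) : ℝ×ℝ → ℝ×ℝ := fun z => p + affL e f z

lemma affL_apply (e f : ℝ×ℝ) (z : ℝ×ℝ) : affL e f z = z.1 • e + z.2 • f := by
  simp [affL]

lemma affMap_apply (p e f : ℝ×ℝ) (z : ℝ×ℝ) :
    affMap p e f z = p + (z.1 • e + z.2 • f) := by simp [affMap, affL_apply]

lemma hasFDerivAt_affMap (p e f : ℝ×ℝ) (z : ℝ×ℝ) :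
    HasFDerivAt (affMap p e f) (affL e f) z :=
  (affL e f).hasFDerivAt.const_add p

lemma contDiff_affMap (p e f : ℝ×ℝ) : ContDiff ℝ 1 (affMap p e f) :=
  contDiff_const.add (affL e f).contDiff

noncomputable def affA (p e f : ℝ×ℝ) : (ℝ×ℝ) →ᵃ[ℝ] (ℝ×ℝ) :=
  AffineMap.mk' (affMap p e f) (affL e f).toLinearMap 0 (by
    intro z
    simp [affMap_apply, affL_apply]
    abel)

lemma image_refTri (p e f : ℝ×ℝ) :
    affMap p e f '' refTri = convexHull ℝ {p, p + e, p + f} := by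
  have h : affMap p e f '' refTri = (affA p e f) '' refTri := rfl
  rw [h, refTri_eq, AffineMap.image_convexHull]
  congr 1
  rw [Set.image_insert_eq, Set.image_insert_eq, Set.image_singleton]
  have h0 : affA p e f (0, 0) = p := by
    show affMap p e f (0,0) = p
    simp [affMap_apply]
  have h1 : affA p e f (1, 0) = p + e := by
    show affMap p e f (1,0) = p + e
    simp [affMap_apply]
  have h2 : affA p e f (0, 1) = p + f := by
    show affMap p e f (0,1) = p + f
    simp [affMap_apply]
  rw [h0, h1, h2]

lemma cov (p e f : ℝ×ℝ) (hinj : Function.Injective (affMap p e f)) (g : ℝ×ℝ → ℝ) :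
    ∫ x in affMap p e f '' refTri, g x
      = ∫ z in refTri, |(affL e f).det| • g (affMap p e f z) :=
  integral_image_eq_integral_abs_det_fderiv_smul volume measurableSet_refTri
    (fun x _ => (hasFDerivAt_affMap p e f x).hasFDerivWithinAt) hinj.injOn g

lemma affL_injective (e f : ℝ×ℝ) (h : ∀ s t : ℝ, s • e + t • f = 0 → s = 0 ∧ t = 0) :
    Function.Injective (affL e f) := by
  intro z₁ z₂ hz
  have h0 : affL e f (z₁ - z₂) = 0 := by rw [map_sub, hz, sub_self]
  rw [affL_apply] at h0
  obtain ⟨h1, h2⟩ := h _ _ h0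
  have : z₁ - z₂ = 0 := Prod.ext h1 h2
  exact sub_eq_zero.mp this

lemma affMap_injective (p e f : ℝ×ℝ) (h : ∀ s t : ℝ, s • e + t • f = 0 → s = 0 ∧ t = 0) :
    Function.Injective (affMap p e f) := by
  intro z₁ z₂ hz
  apply affL_injective e f h
  have := hz
  simp only [affMap] at this
  exact add_left_cancel this

lemma affL_det_ne_zero (e f : ℝ×ℝ) (h : ∀ s t : ℝ, s • e + t • f = 0 → s = 0 ∧ t = 0) :
    (affL e f).det ≠ 0 := by
  have hinj : Function.Injective (affL e f).toLinearMap := affL_injective e f h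
  have hbij : Function.Bijective (affL e f).toLinearMap :=
    ⟨hinj, LinearMap.injective_iff_surjective.mp hinj⟩
  have hE := (LinearEquiv.ofBijective (affL e f).toLinearMap hbij).isUnit_det'
  have hcoe : ((LinearEquiv.ofBijective (affL e f).toLinearMap hbij) :
      (ℝ×ℝ) →ₗ[ℝ] (ℝ×ℝ)) = (affL e f).toLinearMap := rfl
  rw [hcoe] at hE
  exact isUnit_iff_ne_zero.mp hE

lemma affL_surjective (e f : ℝ×ℝ) (h : ∀ s t : ℝ, s • e + t • f = 0 → s = 0 ∧ t = 0) :
    Function.Surjective (affL e f) := by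
  have hinj : Function.Injective (affL e f).toLinearMap := affL_injective e f h
  exact LinearMap.injective_iff_surjective.mp hinj

lemma pd1_comp_aff (w : ℝ×ℝ→ℝ) (hw : ContDiff ℝ 1 w) (p e f : ℝ×ℝ) (z : ℝ×ℝ) :
    pd1 (fun z => w (affMap p e f z)) z
      = e.1 * pd1 w (affMap p e f z) + e.2 * pd2 w (affMap p e f z) := by
  have h := ((hw.differentiable one_ne_zero _).hasFDerivAt.comp z (hasFDerivAt_affMap p e f z))
  have h' : HasFDerivAt (fun z => w (affMap p e f z))
      ((fderiv ℝ w (affMap p e f z)).comp (affL e f)) z := h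
  rw [pd1, h'.fderiv]
  have h2 : affL e f (1, 0) = e := by simp [affL_apply]
  simp only [ContinuousLinearMap.coe_comp', Function.comp_apply, h2]
  rw [clm_apply_eq]
  rfl

lemma pd2_comp_aff (w : ℝ×ℝ→ℝ) (hw : ContDiff ℝ 1 w) (p e f : ℝ×ℝ) (z : ℝ×ℝ) :
    pd2 (fun z => w (affMap p e f z)) z
      = f.1 * pd1 w (affMap p e f z) + f.2 * pd2 w (affMap p e f z) := by
  have h := ((hw.differentiable one_ne_zero _).hasFDerivAt.comp z (hasFDerivAt_affMap p e f z))
  have h' : HasFDerivAt (fun z => w (affMap p e f z))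
      ((fderiv ℝ w (affMap p e f z)).comp (affL e f)) z := h
  rw [pd2, h'.fderiv]
  have h2 : affL e f (0, 1) = f := by simp [affL_apply]
  simp only [ContinuousLinearMap.coe_comp', Function.comp_apply, h2]
  rw [clm_apply_eq]
  rfl

lemma indep_of_affInd (p₁ p₂ p₃ : ℝ×ℝ) (hind : AffineIndependent ℝ ![p₁, p₂, p₃]) :
    ∀ s t : ℝ, s • (p₂ - p₁) + t • (p₃ - p₁) = 0 → s = 0 ∧ t = 0 := by
  have h0 := (affineIndependent_iff_linearIndependent_vsub ℝ ![p₁, p₂, p₃] 0).mp hind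
  set g : Fin 2 → {x : Fin 3 // x ≠ 0} := ![⟨1, by decide⟩, ⟨2, by decide⟩] with hgdef
  have hg : Function.Injective g := by decide
  have h1 := h0.comp g hg
  have heq : (fun i => (![p₁, p₂, p₃] (g i).val -ᵥ ![p₁, p₂, p₃] 0 : ℝ×ℝ))
      = ![p₂ - p₁, p₃ - p₁] := by
    funext i; fin_cases i <;> simp [hgdef]
  rw [show ((fun i : {x : Fin 3 // x ≠ 0} => (![p₁, p₂, p₃] i.val -ᵥ ![p₁, p₂, p₃] 0 : ℝ×ℝ)) ∘ g)
      = ![p₂ - p₁, p₃ - p₁] from heq] at h1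
  exact fun s t hst => LinearIndependent.pair_iff.mp h1 s t hst

lemma key_lemma (p₁ p₂ p₃ : ℝ × ℝ) (hind : AffineIndependent ℝ ![p₁, p₂, p₃])
    (w : ℝ×ℝ→ℝ) (hw : ContDiff ℝ 1 w) (a₁ a₂ a₃ : ℝ)
    (hmean : (∫ q in convexHull ℝ {p₁, p₂, p₃}, w q) = 0)
    (hE1 : (∫ t in (0:ℝ)..1, w (p₂ + t • (p₃ - p₂))) = 0)
    (hE2 : (∫ t in (0:ℝ)..1, w (p₃ + t • (p₁ - p₃))) = 0)
    (hE3 : (∫ t in (0:ℝ)..1, w (p₁ + t • (p₂ - p₁))) = 0) :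
    (∫ q in convexHull ℝ {p₁, p₂, p₃},
      ((2*a₁*q.1 + a₂) * pd1 w q + (2*a₁*q.2 + a₃) * pd2 w q)) = 0 := by
  set e := p₂ - p₁ with he
  set f := p₃ - p₁ with hf
  have hpair := indep_of_affInd p₁ p₂ p₃ hind
  have hinj := affMap_injective p₁ e f hpair
  have hdet := affL_det_ne_zero e f hpair
  have hTimg : convexHull ℝ {p₁, p₂, p₃} = affMap p₁ e f '' refTri := by
    rw [image_refTri]
    have h1 : p₁ + e = p₂ := by rw [he]; abel
    have h2 : p₁ + f = p₃ := by rw [hf]; abel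
    rw [h1, h2]
  -- the vector b
  obtain ⟨b, hb⟩ := affL_surjective e f hpair (2*a₁*p₁.1 + a₂, 2*a₁*p₁.2 + a₃)
  rw [affL_apply] at hb
  have hb1 : b.1 * e.1 + b.2 * f.1 = 2*a₁*p₁.1 + a₂ := by
    have := congrArg Prod.fst hb; simpa using this
  have hb2 : b.1 * e.2 + b.2 * f.2 = 2*a₁*p₁.2 + a₃ := by
    have := congrArg Prod.snd hb; simpa using this
  have hWc : ContDiff ℝ 1 (fun z => w (affMap p₁ e f z)) :=
    hw.comp (contDiff_affMap p₁ e f)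
  -- mean of W over refTri is zero
  have hWmean : (∫ z in refTri, w (affMap p₁ e f z)) = 0 := by
    rw [hTimg, cov p₁ e f hinj w] at hmean
    rw [MeasureTheory.integral_smul] at hmean
    rcases smul_eq_zero.mp hmean with h | h
    · exact absurd (abs_eq_zero.mp h) hdet
    · exact h
  -- the pointwise identity transporting the integrand
  have hpt : ∀ z : ℝ×ℝ,
      (2*a₁*(affMap p₁ e f z).1 + a₂) * pd1 w (affMap p₁ e f z)
        + (2*a₁*(affMap p₁ e f z).2 + a₃) * pd2 w (affMap p₁ e f z)
      = (2*a₁*z.1 + b.1) * pd1 (fun z => w (affMap p₁ e f z)) z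
        + (2*a₁*z.2 + b.2) * pd2 (fun z => w (affMap p₁ e f z)) z := by
    intro z
    rw [pd1_comp_aff w hw p₁ e f z, pd2_comp_aff w hw p₁ e f z]
    have hq1 : (affMap p₁ e f z).1 = p₁.1 + (z.1 * e.1 + z.2 * f.1) := by
      rw [affMap_apply]; simp
    have hq2 : (affMap p₁ e f z).2 = p₁.2 + (z.1 * e.2 + z.2 * f.2) := by
      rw [affMap_apply]; simp
    rw [hq1, hq2]
    linear_combination pd1 w (affMap p₁ e f z) * hb1.symm + pd2 w (affMap p₁ e f z) * hb2.symm
  -- transport the integral to the reference triangle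
  rw [hTimg, cov p₁ e f hinj _, MeasureTheory.integral_smul]
  have hI : (∫ z in refTri,
      ((2*a₁*(affMap p₁ e f z).1 + a₂) * pd1 w (affMap p₁ e f z)
        + (2*a₁*(affMap p₁ e f z).2 + a₃) * pd2 w (affMap p₁ e f z)))
      = ∫ z in refTri, ((2*a₁*z.1 + b.1) * pd1 (fun z => w (affMap p₁ e f z)) z
        + (2*a₁*z.2 + b.2) * pd2 (fun z => w (affMap p₁ e f z)) z) :=
    integral_congr_ae (Filter.Eventually.of_forall hpt)
  rw [hI]
  -- now prove the reference-triangle integral vanishes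
  have hF1c : ContDiff ℝ 1 (fun z : ℝ×ℝ => (2*a₁*z.1 + b.1) * w (affMap p₁ e f z)) :=
    (((contDiff_const.mul contDiff_fst).add contDiff_const).mul hWc)
  have hF2c : ContDiff ℝ 1 (fun z : ℝ×ℝ => (2*a₁*z.2 + b.2) * w (affMap p₁ e f z)) :=
    (((contDiff_const.mul contDiff_snd).add contDiff_const).mul hWc)
  have hptF : ∀ z : ℝ×ℝ,
      (2*a₁*z.1 + b.1) * pd1 (fun z => w (affMap p₁ e f z)) z
        + (2*a₁*z.2 + b.2) * pd2 (fun z => w (affMap p₁ e f z)) z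
      = pd1 (fun z : ℝ×ℝ => (2*a₁*z.1 + b.1) * w (affMap p₁ e f z)) z
        + pd2 (fun z : ℝ×ℝ => (2*a₁*z.2 + b.2) * w (affMap p₁ e f z)) z
        - (2*(2*a₁)) * w (affMap p₁ e f z) := by
    intro z
    rw [pd1_mul (fun z => w (affMap p₁ e f z)) hWc (2*a₁) b.1 z,
      pd2_mul (fun z => w (affMap p₁ e f z)) hWc (2*a₁) b.2 z]
    ring
  have hIcongr : (∫ z in refTri, ((2*a₁*z.1 + b.1) * pd1 (fun z => w (affMap p₁ e f z)) z
        + (2*a₁*z.2 + b.2) * pd2 (fun z => w (affMap p₁ e f z)) z))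
      = ∫ z in refTri,
        (pd1 (fun z : ℝ×ℝ => (2*a₁*z.1 + b.1) * w (affMap p₁ e f z)) z
          + pd2 (fun z : ℝ×ℝ => (2*a₁*z.2 + b.2) * w (affMap p₁ e f z)) z
          - (2*(2*a₁)) * w (affMap p₁ e f z)) :=
    integral_congr_ae (Filter.Eventually.of_forall hptF)
  rw [hIcongr]
  -- integrability on refTri
  have int1 : IntegrableOn
      (fun z => pd1 (fun z : ℝ×ℝ => (2*a₁*z.1 + b.1) * w (affMap p₁ e f z)) z) refTri volume :=
    (continuous_pd1 _ hF1c).continuousOn.integrableOn_compact isCompact_refTri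
  have int2 : IntegrableOn
      (fun z => pd2 (fun z : ℝ×ℝ => (2*a₁*z.2 + b.2) * w (affMap p₁ e f z)) z) refTri volume :=
    (continuous_pd2 _ hF2c).continuousOn.integrableOn_compact isCompact_refTri
  have int3 : IntegrableOn
      (fun z => (2*(2*a₁)) * w (affMap p₁ e f z)) refTri volume :=
    ((continuous_const.mul hWc.continuous)).continuousOn.integrableOn_compact isCompact_refTri
  have int12 : IntegrableOn
      (fun z => pd1 (fun z : ℝ×ℝ => (2*a₁*z.1 + b.1) * w (affMap p₁ e f z)) z
        + pd2 (fun z : ℝ×ℝ => (2*a₁*z.2 + b.2) * w (affMap p₁ e f z)) z) refTri volume :=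
    int1.add int2
  rw [MeasureTheory.integral_sub int12 int3,
    MeasureTheory.integral_add int1 int2, MeasureTheory.integral_const_mul, hWmean,
    green1 _ hF1c, green2 _ hF2c]
  -- boundary parametrisations
  have hΦa : ∀ t : ℝ, affMap p₁ e f (1-t, t) = p₂ + t • (p₃ - p₂) := by
    intro t; rw [affMap_apply, he, hf]; simp only; module
  have hΦb : ∀ t : ℝ, affMap p₁ e f ((0:ℝ), t) = p₁ + t • (p₃ - p₁) := by
    intro t; rw [affMap_apply, he, hf]; simp only; module
  have hΦc : ∀ t : ℝ, affMap p₁ e f (t, (0:ℝ)) = p₁ + t • (p₂ - p₁) := by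
    intro t; rw [affMap_apply, he, hf]; simp only; module
  have hΦd : ∀ t : ℝ, affMap p₁ e f (t, 1-t) = p₂ + (1-t) • (p₃ - p₂) := by
    intro t; rw [affMap_apply, he, hf]; simp only; module
  -- continuity of boundary integrands
  have hwc : Continuous w := hw.continuous
  have hcγ : Continuous (fun t : ℝ => w (p₂ + t • (p₃ - p₂))) := by fun_prop
  -- derived edge integrals
  have hE2' : (∫ t in (0:ℝ)..1, w (p₁ + t • (p₃ - p₁))) = 0 := by
    have h := intervalIntegral.integral_comp_sub_left (a := (0:ℝ)) (b := (1:ℝ))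
      (fun s => w (p₃ + s • (p₁ - p₃))) 1
    calc (∫ t in (0:ℝ)..1, w (p₁ + t • (p₃ - p₁)))
        = ∫ t in (0:ℝ)..1, w (p₃ + (1-t) • (p₁ - p₃)) := by
          apply intervalIntegral.integral_congr
          intro t _
          show w (p₁ + t • (p₃ - p₁)) = w (p₃ + (1-t) • (p₁ - p₃))
          have harg : p₁ + t • (p₃ - p₁) = p₃ + (1-t) • (p₁ - p₃) := by module
          rw [harg]
      _ = ∫ s in (1-(1:ℝ))..(1-(0:ℝ)), w (p₃ + s • (p₁ - p₃)) := h
      _ = 0 := by norm_num [hE2]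
  -- compute the four boundary integrals
  have hsplit1 : (∫ t in (0:ℝ)..1,
      ((fun z : ℝ×ℝ => (2*a₁*z.1 + b.1) * w (affMap p₁ e f z)) (1-t, t)
        - (fun z : ℝ×ℝ => (2*a₁*z.1 + b.1) * w (affMap p₁ e f z)) (0, t)))
      = (∫ t in (0:ℝ)..1, (2*a₁*(1-t) + b.1) * w (p₂ + t • (p₃ - p₂)))
        - b.1 * (∫ t in (0:ℝ)..1, w (p₁ + t • (p₃ - p₁))) := by
    have c1 : Continuous (fun t : ℝ => (2*a₁*(1-t) + b.1) * w (p₂ + t • (p₃ - p₂))) := by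
      fun_prop
    have c2 : Continuous (fun t : ℝ => b.1 * w (p₁ + t • (p₃ - p₁))) := by fun_prop
    rw [show (∫ t in (0:ℝ)..1,
        ((fun z : ℝ×ℝ => (2*a₁*z.1 + b.1) * w (affMap p₁ e f z)) (1-t, t)
          - (fun z : ℝ×ℝ => (2*a₁*z.1 + b.1) * w (affMap p₁ e f z)) (0, t)))
        = ∫ t in (0:ℝ)..1, ((2*a₁*(1-t) + b.1) * w (p₂ + t • (p₃ - p₂))
            - b.1 * w (p₁ + t • (p₃ - p₁))) from by
      apply intervalIntegral.integral_congr
      intro t _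
      simp only [hΦa, hΦb]
      norm_num]
    rw [intervalIntegral.integral_sub (c1.intervalIntegrable 0 1) (c2.intervalIntegrable 0 1),
      intervalIntegral.integral_const_mul]
  have hsplit2 : (∫ t in (0:ℝ)..1,
      ((fun z : ℝ×ℝ => (2*a₁*z.2 + b.2) * w (affMap p₁ e f z)) (t, 1-t)
        - (fun z : ℝ×ℝ => (2*a₁*z.2 + b.2) * w (affMap p₁ e f z)) (t, 0)))
      = (∫ t in (0:ℝ)..1, (2*a₁*t + b.2) * w (p₂ + t • (p₃ - p₂)))
        - b.2 * (∫ t in (0:ℝ)..1, w (p₁ + t • (p₂ - p₁))) := by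
    have c1 : Continuous (fun t : ℝ => (2*a₁*(1-t) + b.2) * w (p₂ + (1-t) • (p₃ - p₂))) := by
      fun_prop
    have c2 : Continuous (fun t : ℝ => b.2 * w (p₁ + t • (p₂ - p₁))) := by fun_prop
    have hsub := intervalIntegral.integral_comp_sub_left (a := (0:ℝ)) (b := (1:ℝ))
      (fun s => (2*a₁*s + b.2) * w (p₂ + s • (p₃ - p₂))) 1
    rw [show (∫ t in (0:ℝ)..1,
        ((fun z : ℝ×ℝ => (2*a₁*z.2 + b.2) * w (affMap p₁ e f z)) (t, 1-t)
          - (fun z : ℝ×ℝ => (2*a₁*z.2 + b.2) * w (affMap p₁ e f z)) (t, 0)))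
        = ∫ t in (0:ℝ)..1, ((2*a₁*(1-t) + b.2) * w (p₂ + (1-t) • (p₃ - p₂))
            - b.2 * w (p₁ + t • (p₂ - p₁))) from by
      apply intervalIntegral.integral_congr
      intro t _
      simp only [hΦd, hΦc]
      norm_num]
    rw [intervalIntegral.integral_sub (c1.intervalIntegrable 0 1) (c2.intervalIntegrable 0 1),
      intervalIntegral.integral_const_mul]
    congr 1
    calc (∫ t in (0:ℝ)..1, (2*a₁*(1-t) + b.2) * w (p₂ + (1-t) • (p₃ - p₂)))
        = ∫ s in (1-(1:ℝ))..(1-(0:ℝ)), (2*a₁*s + b.2) * w (p₂ + s • (p₃ - p₂)) := hsub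
      _ = ∫ t in (0:ℝ)..1, (2*a₁*t + b.2) * w (p₂ + t • (p₃ - p₂)) := by norm_num
  rw [hsplit1, hsplit2, hE2', hE3]
  -- combine the two hypotenuse integrals
  have chyp1 : Continuous (fun t : ℝ => (2*a₁*(1-t) + b.1) * w (p₂ + t • (p₃ - p₂))) := by
    fun_prop
  have chyp2 : Continuous (fun t : ℝ => (2*a₁*t + b.2) * w (p₂ + t • (p₃ - p₂))) := by fun_prop
  have hcomb : (∫ t in (0:ℝ)..1, (2*a₁*(1-t) + b.1) * w (p₂ + t • (p₃ - p₂)))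
      + (∫ t in (0:ℝ)..1, (2*a₁*t + b.2) * w (p₂ + t • (p₃ - p₂)))
      = (2*a₁ + b.1 + b.2) * ∫ t in (0:ℝ)..1, w (p₂ + t • (p₃ - p₂)) := by
    rw [← intervalIntegral.integral_add (chyp1.intervalIntegrable 0 1)
      (chyp2.intervalIntegrable 0 1), ← intervalIntegral.integral_const_mul]
    apply intervalIntegral.integral_congr
    intro t _
    ring
  simp only [mul_zero, sub_zero, add_zero]
  rw [hcomb, hE1, mul_zero, smul_zero]

/-- The interpolation `Π^(α)u` (the element of `Q_α` with the same edge means and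
area mean as `u`) is an orthogonal projection in the `H¹` seminorm. -/
theorem interp_alpha_pythagoras (p₁ p₂ p₃ : ℝ × ℝ)
    (hind : AffineIndependent ℝ ![p₁, p₂, p₃])
    (u : ℝ × ℝ → ℝ) (hu : ContDiff ℝ 1 u)
    (a₁ a₂ a₃ a₄ : ℝ) (P : ℝ × ℝ → ℝ)
    (hP : P = fun q => a₁ * (q.1^2 + q.2^2) + a₂ * q.1 + a₃ * q.2 + a₄)
    (hmean : (∫ q in convexHull ℝ {p₁, p₂, p₃}, P q)
        = ∫ q in convexHull ℝ {p₁, p₂, p₃}, u q)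
    (he₁ : (∫ t in (0:ℝ)..1, P (p₂ + t • (p₃ - p₂)))
        = ∫ t in (0:ℝ)..1, u (p₂ + t • (p₃ - p₂)))
    (he₂ : (∫ t in (0:ℝ)..1, P (p₃ + t • (p₁ - p₃)))
        = ∫ t in (0:ℝ)..1, u (p₃ + t • (p₁ - p₃)))
    (he₃ : (∫ t in (0:ℝ)..1, P (p₁ + t • (p₂ - p₁)))
        = ∫ t in (0:ℝ)..1, u (p₁ + t • (p₂ - p₁))) :
    (∫ q in convexHull ℝ {p₁, p₂, p₃}, ((pd1 P q)^2 + (pd2 P q)^2)) +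
      (∫ q in convexHull ℝ {p₁, p₂, p₃},
        ((pd1 (fun z => u z - P z) q)^2 + (pd2 (fun z => u z - P z) q)^2)) =
    ∫ q in convexHull ℝ {p₁, p₂, p₃}, ((pd1 u q)^2 + (pd2 u q)^2) := by


  subst hP
  beta_reduce
  have hPc : ContDiff ℝ 1 (fun q : ℝ×ℝ => a₁ * (q.1^2 + q.2^2) + a₂ * q.1 + a₃ * q.2 + a₄) := by
    fun_prop
  have hw : ContDiff ℝ 1 (fun z : ℝ×ℝ =>
      u z - (a₁ * (z.1^2 + z.2^2) + a₂ * z.1 + a₃ * z.2 + a₄)) := hu.sub hPc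
  have hTcomp : IsCompact (convexHull ℝ ({p₁, p₂, p₃} : Set (ℝ×ℝ))) :=
    (Set.toFinite _).isCompact_convexHull ℝ
  -- transported hypotheses for w := u - P
  have hintu : IntegrableOn u (convexHull ℝ {p₁, p₂, p₃}) volume :=
    hu.continuous.continuousOn.integrableOn_compact hTcomp
  have hintP : IntegrableOn (fun q : ℝ×ℝ => a₁ * (q.1^2 + q.2^2) + a₂ * q.1 + a₃ * q.2 + a₄)
      (convexHull ℝ {p₁, p₂, p₃}) volume :=
    hPc.continuous.continuousOn.integrableOn_compact hTcomp
  have hmean' : (∫ q in convexHull ℝ {p₁, p₂, p₃},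
      (u q - (a₁ * (q.1^2 + q.2^2) + a₂ * q.1 + a₃ * q.2 + a₄))) = 0 := by
    rw [MeasureTheory.integral_sub hintu hintP, hmean, sub_self]
  have hedge : ∀ γ : ℝ → ℝ×ℝ, Continuous γ →
      ((∫ t in (0:ℝ)..1, (a₁ * ((γ t).1^2 + (γ t).2^2) + a₂ * (γ t).1 + a₃ * (γ t).2 + a₄))
        = ∫ t in (0:ℝ)..1, u (γ t)) →
      (∫ t in (0:ℝ)..1,
        (u (γ t) - (a₁ * ((γ t).1^2 + (γ t).2^2) + a₂ * (γ t).1 + a₃ * (γ t).2 + a₄))) = 0 := by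
    intro γ hγ h
    have i1 : IntervalIntegrable (fun t => u (γ t)) volume 0 1 :=
      (hu.continuous.comp hγ).intervalIntegrable 0 1
    have i2 : IntervalIntegrable
        (fun t => a₁ * ((γ t).1^2 + (γ t).2^2) + a₂ * (γ t).1 + a₃ * (γ t).2 + a₄) volume 0 1 :=
      (hPc.continuous.comp hγ).intervalIntegrable 0 1
    rw [intervalIntegral.integral_sub i1 i2, h, sub_self]
  have hE1' := hedge (fun t => p₂ + t • (p₃ - p₂)) (by fun_prop) he₁
  have hE2' := hedge (fun t => p₃ + t • (p₁ - p₃)) (by fun_prop) he₂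
  have hE3' := hedge (fun t => p₁ + t • (p₂ - p₁)) (by fun_prop) he₃
  have key := key_lemma p₁ p₂ p₃ hind
    (fun z : ℝ×ℝ => u z - (a₁ * (z.1^2 + z.2^2) + a₂ * z.1 + a₃ * z.2 + a₄)) hw a₁ a₂ a₃
    hmean' hE1' hE2' hE3'
  -- pointwise Pythagoras
  have hpt : ∀ q : ℝ×ℝ, (pd1 u q)^2 + (pd2 u q)^2
      = ((pd1 (fun q : ℝ×ℝ => a₁ * (q.1^2 + q.2^2) + a₂ * q.1 + a₃ * q.2 + a₄) q)^2
          + (pd2 (fun q : ℝ×ℝ => a₁ * (q.1^2 + q.2^2) + a₂ * q.1 + a₃ * q.2 + a₄) q)^2)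
        + (((pd1 (fun z : ℝ×ℝ =>
              u z - (a₁ * (z.1^2 + z.2^2) + a₂ * z.1 + a₃ * z.2 + a₄)) q)^2
            + (pd2 (fun z : ℝ×ℝ =>
              u z - (a₁ * (z.1^2 + z.2^2) + a₂ * z.1 + a₃ * z.2 + a₄)) q)^2)
          + 2*((2*a₁*q.1 + a₂) * pd1 (fun z : ℝ×ℝ =>
              u z - (a₁ * (z.1^2 + z.2^2) + a₂ * z.1 + a₃ * z.2 + a₄)) q
            + (2*a₁*q.2 + a₃) * pd2 (fun z : ℝ×ℝ =>
              u z - (a₁ * (z.1^2 + z.2^2) + a₂ * z.1 + a₃ * z.2 + a₄)) q)) := by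
    intro q
    have h1 := pd1_sub u _ hu hPc q
    have h2 := pd2_sub u _ hu hPc q
    have h3 := pd1_P a₁ a₂ a₃ a₄ q
    have h4 := pd2_P a₁ a₂ a₃ a₄ q
    rw [h1, h2, h3, h4]
    ring
  -- integrability
  have ia : IntegrableOn (fun q =>
      (pd1 (fun q : ℝ×ℝ => a₁ * (q.1^2 + q.2^2) + a₂ * q.1 + a₃ * q.2 + a₄) q)^2
        + (pd2 (fun q : ℝ×ℝ => a₁ * (q.1^2 + q.2^2) + a₂ * q.1 + a₃ * q.2 + a₄) q)^2)
      (convexHull ℝ {p₁, p₂, p₃}) volume :=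
    (((continuous_pd1 _ hPc).pow 2).add
      ((continuous_pd2 _ hPc).pow 2)).continuousOn.integrableOn_compact hTcomp
  have ib : IntegrableOn (fun q =>
      (pd1 (fun z : ℝ×ℝ => u z - (a₁ * (z.1^2 + z.2^2) + a₂ * z.1 + a₃ * z.2 + a₄)) q)^2
        + (pd2 (fun z : ℝ×ℝ => u z - (a₁ * (z.1^2 + z.2^2) + a₂ * z.1 + a₃ * z.2 + a₄)) q)^2)
      (convexHull ℝ {p₁, p₂, p₃}) volume :=
    (((continuous_pd1 _ hw).pow 2).add
      ((continuous_pd2 _ hw).pow 2)).continuousOn.integrableOn_compact hTcomp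
  have ic : IntegrableOn (fun q =>
      2*((2*a₁*q.1 + a₂) * pd1 (fun z : ℝ×ℝ =>
          u z - (a₁ * (z.1^2 + z.2^2) + a₂ * z.1 + a₃ * z.2 + a₄)) q
        + (2*a₁*q.2 + a₃) * pd2 (fun z : ℝ×ℝ =>
          u z - (a₁ * (z.1^2 + z.2^2) + a₂ * z.1 + a₃ * z.2 + a₄)) q))
      (convexHull ℝ {p₁, p₂, p₃}) volume := by
    apply Continuous.continuousOn ?_ |>.integrableOn_compact hTcomp
    have c1 := continuous_pd1 _ hw
    have c2 := continuous_pd2 _ hw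
    fun_prop
  have hsplit : (∫ q in convexHull ℝ {p₁, p₂, p₃}, ((pd1 u q)^2 + (pd2 u q)^2))
      = (∫ q in convexHull ℝ {p₁, p₂, p₃},
          ((pd1 (fun q : ℝ×ℝ => a₁ * (q.1^2 + q.2^2) + a₂ * q.1 + a₃ * q.2 + a₄) q)^2
            + (pd2 (fun q : ℝ×ℝ => a₁ * (q.1^2 + q.2^2) + a₂ * q.1 + a₃ * q.2 + a₄) q)^2))
        + ((∫ q in convexHull ℝ {p₁, p₂, p₃},
          ((pd1 (fun z : ℝ×ℝ =>
              u z - (a₁ * (z.1^2 + z.2^2) + a₂ * z.1 + a₃ * z.2 + a₄)) q)^2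
            + (pd2 (fun z : ℝ×ℝ =>
              u z - (a₁ * (z.1^2 + z.2^2) + a₂ * z.1 + a₃ * z.2 + a₄)) q)^2))
          + ∫ q in convexHull ℝ {p₁, p₂, p₃},
            (2*((2*a₁*q.1 + a₂) * pd1 (fun z : ℝ×ℝ =>
                u z - (a₁ * (z.1^2 + z.2^2) + a₂ * z.1 + a₃ * z.2 + a₄)) q
              + (2*a₁*q.2 + a₃) * pd2 (fun z : ℝ×ℝ =>
                u z - (a₁ * (z.1^2 + z.2^2) + a₂ * z.1 + a₃ * z.2 + a₄)) q))) := by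
    have ibc : IntegrableOn (fun q =>
        ((pd1 (fun z : ℝ×ℝ =>
            u z - (a₁ * (z.1^2 + z.2^2) + a₂ * z.1 + a₃ * z.2 + a₄)) q)^2
          + (pd2 (fun z : ℝ×ℝ =>
            u z - (a₁ * (z.1^2 + z.2^2) + a₂ * z.1 + a₃ * z.2 + a₄)) q)^2)
        + 2*((2*a₁*q.1 + a₂) * pd1 (fun z : ℝ×ℝ =>
            u z - (a₁ * (z.1^2 + z.2^2) + a₂ * z.1 + a₃ * z.2 + a₄)) q
          + (2*a₁*q.2 + a₃) * pd2 (fun z : ℝ×ℝ =>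
            u z - (a₁ * (z.1^2 + z.2^2) + a₂ * z.1 + a₃ * z.2 + a₄)) q))
        (convexHull ℝ {p₁, p₂, p₃}) volume := ib.add ic
    rw [← MeasureTheory.integral_add ib ic, ← MeasureTheory.integral_add ia ibc]
    exact integral_congr_ae (Filter.Eventually.of_forall hpt)
  have hlast : (∫ q in convexHull ℝ {p₁, p₂, p₃},
      (2*((2*a₁*q.1 + a₂) * pd1 (fun z : ℝ×ℝ =>
          u z - (a₁ * (z.1^2 + z.2^2) + a₂ * z.1 + a₃ * z.2 + a₄)) q
        + (2*a₁*q.2 + a₃) * pd2 (fun z : ℝ×ℝ =>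
          u z - (a₁ * (z.1^2 + z.2^2) + a₂ * z.1 + a₃ * z.2 + a₄)) q))) = 0 := by
    rw [MeasureTheory.integral_const_mul, key, mul_zero]
  rw [hsplit, hlast, add_zero]
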